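/- arXiv:2311.15109 — 2 statements merged into one kernel-verified Lean document; each statement's English description precedes it below -/
import Mathlib

section
/- Let A be an n×n real positive definite matrix with strictly positive diagonal entries and strictly negative off-diagonal entries. Then every cofactor of A is strictly positive. -/
/-!
A positive definite matrix with nonpositive off-diagonal entries is inverse-positive: if `A x ≥ 0`
then `x ≥ 0`. Indeed, writing `x = x⁺ - x⁻`, the cross term `x⁻ ⬝ A x⁺` is `≤ 0` because `x⁻` and
`x⁺` have disjoint supports, so `x⁻ ⬝ A x⁻ = x⁻ ⬝ A x⁺ - x⁻ ⬝ A x ≤ 0`, forcing `x⁻ = 0`.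
The `i`-th column `x` of the adjugate satisfies `A x = det A • eᵢ ≥ 0`, so it is nonnegative and
nonzero; since the off-diagonal entries are strictly negative, a zero entry `x m = 0` would give
`(A x) m = ∑_{l ≠ m} A m l * x l < 0`, so every entry is positive.
-/

open Matrix

namespace Matrix

variable {ι R : Type*} [Fintype ι]

theorem mulVec_adjugate_col [DecidableEq ι] [CommRing R] (A : Matrix ι ι R) (i : ι) :
    A *ᵥ A.adjugate.col i = A.det • Pi.single i 1 := by
  rw [← mulVec_single_one, mulVec_mulVec, mul_adjugate, smul_mulVec, one_mulVec]

variable [CommRing R] [LinearOrder R] [IsStrictOrderedRing R]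

theorem dotProduct_mulVec_nonpos_of_disjoint {A : Matrix ι ι R}
    (hoff : ∀ i j, i ≠ j → A i j ≤ 0) {y p : ι → R} (hy : 0 ≤ y) (hp : 0 ≤ p)
    (hyp : ∀ k, y k * p k = 0) : y ⬝ᵥ A *ᵥ p ≤ 0 := by
  simp only [dotProduct, mulVec, Finset.mul_sum]
  refine Finset.sum_nonpos fun k _ => Finset.sum_nonpos fun l _ => ?_
  rcases eq_or_ne k l with rfl | hkl
  · rw [mul_left_comm, hyp k, mul_zero]
  · rw [← mul_assoc]
    exact mul_nonpos_of_nonpos_of_nonneg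
      (mul_nonpos_of_nonneg_of_nonpos (hy k) (hoff k l hkl)) (hp l)

theorem nonneg_of_mulVec_nonneg_of_offDiag_nonpos [StarRing R] [TrivialStar R] {A : Matrix ι ι R}
    (hA : A.PosDef) (hoff : ∀ i j, i ≠ j → A i j ≤ 0) {x : ι → R} (hAx : 0 ≤ A *ᵥ x) :
    0 ≤ x := by
  set y : ι → R := fun k => (x k)⁻
  set p : ι → R := fun k => (x k)⁺
  have hx : x = p - y := funext fun k => (posPart_sub_negPart (x k)).symm
  have hcross : y ⬝ᵥ A *ᵥ p ≤ 0 :=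
    dotProduct_mulVec_nonpos_of_disjoint hoff (fun k => negPart_nonneg _)
      (fun k => posPart_nonneg _) fun k => by
        rcases le_total 0 (x k) with h | h <;> simp [y, p, h]
  have hyx : 0 ≤ y ⬝ᵥ A *ᵥ x :=
    Finset.sum_nonneg fun k _ => mul_nonneg (negPart_nonneg _) (hAx k)
  have hyy : y ⬝ᵥ A *ᵥ y ≤ 0 := by
    have : A *ᵥ y = A *ᵥ p - A *ᵥ x := by rw [← mulVec_sub, hx, sub_sub_cancel]
    rw [this, dotProduct_sub]
    linarith
  have hy : y = 0 := by
    by_contra hne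
    have := hA.dotProduct_mulVec_pos hne
    rw [star_trivial] at this
    exact hyy.not_gt this
  exact fun k => negPart_eq_zero.mp (congrFun hy k)

theorem pos_of_mulVec_nonneg_of_offDiag_neg {A : Matrix ι ι R}
    (hoff : ∀ i j, i ≠ j → A i j < 0) {x : ι → R} (hx : 0 ≤ x) (hx0 : x ≠ 0)
    (hAx : 0 ≤ A *ᵥ x) (m : ι) : 0 < x m := by
  refine (hx m).lt_of_ne fun hxm => ?_
  obtain ⟨k, hk⟩ : ∃ k, x k ≠ 0 := Function.ne_iff.mp hx0
  have hkm : k ≠ m := by rintro rfl; exact hk hxm.symm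
  have hneg : (A *ᵥ x) m < 0 := by
    refine Finset.sum_neg' (fun l _ => ?_) ⟨k, Finset.mem_univ k, ?_⟩
    · rcases eq_or_ne m l with rfl | hml
      · simp [← hxm]
      · exact mul_nonpos_of_nonpos_of_nonneg (hoff m l hml).le (hx l)
    · exact mul_neg_of_neg_of_pos (hoff m k hkm.symm) ((hx k).lt_of_ne' hk)
  exact (hAx m).not_gt hneg

end Matrix

theorem cofactors_pos_of_posDef_general {n : ℕ} (A : Matrix (Fin n) (Fin n) ℝ)
    (hA : A.PosDef)
    (hoff : ∀ i j, i ≠ j → A i j < 0) :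
    ∀ i j, 0 < A.adjugate j i := by
  intro i j
  have hdet : 0 < A.det := hA.det_pos
  have hAx := A.mulVec_adjugate_col i
  have hAx_nonneg : 0 ≤ A *ᵥ A.adjugate.col i :=
    hAx ▸ smul_nonneg hdet.le (Pi.single_nonneg.mpr zero_le_one)
  have hx_ne : A.adjugate.col i ≠ 0 := fun h => by
    simpa [h, hdet.ne] using congrFun hAx i
  exact pos_of_mulVec_nonneg_of_offDiag_neg hoff
    (nonneg_of_mulVec_nonneg_of_offDiag_nonpos hA (fun i j h => (hoff i j h).le) hAx_nonneg)
    hx_ne hAx_nonneg j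

/-- The (i,j) cofactor of a square matrix: `adjugate A` is the transpose of the
cofactor matrix, so `C^A_{i,j} = adjugate A j i`. -/
theorem cofactors_pos_of_posDef {n : ℕ} (A : Matrix (Fin n) (Fin n) ℝ)
    (hA : A.PosDef)
    (hdiag : ∀ i, 0 < A i i)
    (hoff : ∀ i j, i ≠ j → A i j < 0) :
    ∀ i j, 0 < A.adjugate j i :=
  cofactors_pos_of_posDef_general A hA hoff
end

section
/- Let D ∈ R^{N×n}, and for i ∈ [N] let D^i denote the matrix equal to D in row i and zero elsewhere. Let V_i = diag(γ_{i1},…,γ_{in}) with all γ_{ij} > 0. Then the block matrix H_i = [[D^i V_i (D^i)ᵀ, D^i], [(D^i)ᵀ, V_i^{−1}]] is positive semidefinite for each i, and hence H = [[T*, D], [Dᵀ, S^{−1}]] ⪰ 0 where T* = Σ_i D^i V_i (D^i)ᵀ and S^{−1} = Σ_i V_i^{−1}. Consequently T* − D S Dᵀ ⪰ 0. -/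
/-!
Each `H_i` is PSD because its Schur complement with respect to the positive definite diagonal
block `V_i⁻¹` vanishes. `H` is the sum of the `H_i`, and `T* − D S Dᵀ` is its Schur complement
with respect to `S⁻¹ = Σ_i V_i⁻¹`, which is positive definite as soon as `N > 0`.
-/

open Matrix

theorem Matrix.inv_diagonal_of_ne_zero {n K : Type*} [Fintype n] [DecidableEq n] [Field K]
    {c : n → K} (hc : ∀ j, c j ≠ 0) : (diagonal c)⁻¹ = diagonal fun j => (c j)⁻¹ := by
  refine inv_eq_left_inv ?_
  rw [diagonal_mul_diagonal, ← diagonal_one]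
  exact congrArg diagonal (funext fun j => inv_mul_cancel₀ (hc j))

theorem Matrix.fromBlocks_sum {ι l m n o α : Type*} [AddCommMonoid α] (s : Finset ι)
    (A : ι → Matrix n l α) (B : ι → Matrix n m α) (C : ι → Matrix o l α)
    (D : ι → Matrix o m α) :
    ∑ i ∈ s, fromBlocks (A i) (B i) (C i) (D i) =
      fromBlocks (∑ i ∈ s, A i) (∑ i ∈ s, B i) (∑ i ∈ s, C i) (∑ i ∈ s, D i) := by
  ext (x | x) (y | y) <;> simp [sum_apply]

theorem Matrix.diagonal_sum {ι n α : Type*} [DecidableEq n] [AddCommMonoid α] (s : Finset ι)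
    (v : ι → n → α) : diagonal (∑ i ∈ s, v i) = ∑ i ∈ s, diagonal (v i) :=
  map_sum (diagonalAddMonoidHom n α) v s

theorem Matrix.posSemidef_fromBlocks_diagonal_iff {m n : Type*} [Fintype m] [Fintype n]
    [DecidableEq n] (A : Matrix m m ℝ) (B : Matrix m n ℝ) {c : n → ℝ} (hc : ∀ j, 0 < c j) :
    (fromBlocks A B Bᵀ (diagonal c)).PosSemidef ↔
      (A - B * diagonal (fun j => (c j)⁻¹) * Bᵀ).PosSemidef := by
  have hpos : (diagonal c).PosDef := posDef_diagonal_iff.mpr hc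
  have := hpos.isUnit.invertible
  rw [← inv_diagonal_of_ne_zero fun j => (hc j).ne', ← conjTranspose_eq_transpose_of_trivial]
  exact PosDef.fromBlocks₂₂ A B hpos

/-- Each block matrix `H_i = [[Dⁱ V_i (Dⁱ)ᵀ, Dⁱ], [(Dⁱ)ᵀ, V_i⁻¹]]` is PSD, the
sum `H = [[T*, D], [Dᵀ, S⁻¹]]` is PSD, and consequently `T* − D S Dᵀ ⪰ 0`,
where `Dⁱ` keeps row `i` of `D` and zeroes the others, `V_i = diag(γ_i)`,
`T* = Σ_i Dⁱ V_i (Dⁱ)ᵀ`, and `S = diag(s)` with `s_j = (Σ_i 1/γ_{ij})⁻¹`. -/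
theorem blocks_psd_and_schur {N n : ℕ}
    (D : Matrix (Fin N) (Fin n) ℝ)
    (γ : Fin N → Fin n → ℝ) (hγ : ∀ i j, 0 < γ i j)
    (Drow : Fin N → Matrix (Fin N) (Fin n) ℝ)
    (hDrow : ∀ i k l, Drow i k l = if k = i then D k l else 0)
    (Tstar : Matrix (Fin N) (Fin N) ℝ)
    (hT : Tstar = ∑ i, Drow i * diagonal (γ i) * (Drow i)ᵀ)
    (S : Matrix (Fin n) (Fin n) ℝ)
    (hS : S = diagonal fun j => (∑ i, (γ i j)⁻¹)⁻¹) :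
    (∀ i, (fromBlocks (Drow i * diagonal (γ i) * (Drow i)ᵀ) (Drow i)
        (Drow i)ᵀ (diagonal fun j => (γ i j)⁻¹)).PosSemidef) ∧
      (fromBlocks Tstar D Dᵀ (diagonal fun j => ∑ i, (γ i j)⁻¹)).PosSemidef ∧
      (Tstar - D * S * Dᵀ).PosSemidef := by
  have hHi : ∀ i, (fromBlocks (Drow i * diagonal (γ i) * (Drow i)ᵀ) (Drow i)
      (Drow i)ᵀ (diagonal fun j => (γ i j)⁻¹)).PosSemidef := fun i => by
    rw [posSemidef_fromBlocks_diagonal_iff _ _ fun j => inv_pos.mpr (hγ i j)]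
    simpa using PosSemidef.zero
  have hDsum : ∑ i, Drow i = D := by
    ext k l
    simp [Matrix.sum_apply, hDrow]
  have hH : fromBlocks Tstar D Dᵀ (diagonal fun j => ∑ i, (γ i j)⁻¹) =
      ∑ i, fromBlocks (Drow i * diagonal (γ i) * (Drow i)ᵀ) (Drow i)
        (Drow i)ᵀ (diagonal fun j => (γ i j)⁻¹) := by
    rw [fromBlocks_sum, hT, hDsum, ← transpose_sum, hDsum, ← Finset.sum_fn, diagonal_sum]
  have hHpsd := hH ▸ posSemidef_sum Finset.univ fun i _ => hHi i
  refine ⟨hHi, hHpsd, ?_⟩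
  rcases isEmpty_or_nonempty (Fin N) with _ | _
  · rw [Subsingleton.elim (Tstar - D * S * Dᵀ) 0]
    exact PosSemidef.zero
  · have hsum_pos : ∀ j, 0 < ∑ i, (γ i j)⁻¹ := fun j =>
      Finset.sum_pos (fun i _ => inv_pos.mpr (hγ i j)) Finset.univ_nonempty
    rw [hS]
    exact (posSemidef_fromBlocks_diagonal_iff _ _ hsum_pos).mp hHpsd
end
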